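/- Let h ∈ ℝ[X] and ρ > 0. Then there exists ρ' > 0 such that ρ' − ‖X‖² belongs to the quadratic module generated by h and (1+h)·(ρ − ‖X‖²). Specifically, one can take ρ' = ρ(1+t/2)² where t = t(h,ρ) := Σ_α |c_α|(ρ+1)^{|α|} for h = Σ_α c_α X^α. -/

import Mathlib

/-!
All memberships come from three facts: `h` and `ρ(1 + h) - ‖X‖²` lie in the quadratic module `M`,
and hence, by induction, `ρᵏ(1 + h) - ‖X‖²ᵏ ∈ M`; moreover `‖X‖^{2|α|} - (X^α)²` is a sum of
squares. So `ρ^{|α|}(1 + h) - (X^α)² ∈ M`, and completing the square bounds each non-constant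
term of `h` from above: `L + K (1 + h) - c X^α ∈ M` whenever `c² ≤ 4 L K`. Summing over the terms
of `h` gives `L + K (1 + h) - h ∈ M` with `K < 1`, and adding `ρ / (1 - K)` times this to
`ρ(1 + h) - ‖X‖²` cancels `h`, leaving `ρ (1 + L) / (1 - K) - ‖X‖² ∈ M`. The weights are chosen
so that `ρ (1 + L) / (1 - K) ≤ ρ (1 + t/2)²`, using `4ρᵏ ≤ (ρ + 1)^{2k}` for `k ≥ 1`.
-/

open Finset MvPolynomial

/-- `p` is a sum of squares. -/
def IsSOS {d : ℕ} (p : MvPolynomial (Fin d) ℝ) : Prop :=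
  ∃ (k : ℕ) (q : Fin k → MvPolynomial (Fin d) ℝ), p = ∑ j, q j ^ 2

/-- The quadratic module generated by a finite family `a : ι → ℝ[X]`. -/
def QM {d : ℕ} {ι : Type*} [Fintype ι] (a : ι → MvPolynomial (Fin d) ℝ) :
    Set (MvPolynomial (Fin d) ℝ) :=
  {f | ∃ (σ₀ : MvPolynomial (Fin d) ℝ) (σ : ι → MvPolynomial (Fin d) ℝ),
        IsSOS σ₀ ∧ (∀ i, IsSOS (σ i)) ∧ f = σ₀ + ∑ i, σ i * a i}

/-- `‖X‖² = X₁² + ⋯ + X_d²`. -/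
noncomputable def normSq (d : ℕ) : MvPolynomial (Fin d) ℝ := ∑ i : Fin d, X i ^ 2

/-- `t(f,ρ) = Σ_α |c_α| (ρ+1)^{|α|}`. -/
noncomputable def tBound {d : ℕ} (f : MvPolynomial (Fin d) ℝ) (ρ : ℝ) : ℝ :=
  ∑ α ∈ f.support, |f.coeff α| * (ρ + 1) ^ (α.sum fun _ k => k)

section SumsOfSquares

theorem IsSumSq.prod_sub_prod {R ι : Type*} [CommRing R] (s : Finset ι) {a b : ι → R}
    (hb : ∀ i ∈ s, IsSumSq (b i)) (hab : ∀ i ∈ s, IsSumSq (a i - b i)) :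
    IsSumSq (∏ i ∈ s, a i - ∏ i ∈ s, b i) := by
  classical
  induction s using Finset.induction_on with
  | empty => simp
  | insert j s hj ih =>
    simp only [mem_insert, forall_eq_or_imp] at hb hab
    have ha : IsSumSq (a j) := by simpa using hab.1.add hb.1
    rw [prod_insert hj, prod_insert hj,
      show a j * ∏ i ∈ s, a i - b j * ∏ i ∈ s, b i
        = a j * (∏ i ∈ s, a i - ∏ i ∈ s, b i) + (a j - b j) * ∏ i ∈ s, b i by ring]
    exact (ha.mul (ih hb.2 hab.2)).add (hab.1.mul (IsSumSq.prod hb.2))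

theorem IsSumSq.pow_sub_pow {R : Type*} [CommRing R] {a b : R} (hb : IsSumSq b)
    (hab : IsSumSq (a - b)) (n : ℕ) : IsSumSq (a ^ n - b ^ n) := by
  simpa using IsSumSq.prod_sub_prod (range n) (fun _ _ => hb) (fun _ _ => hab)

theorem isSumSq_C {σ : Type*} {c : ℝ} (hc : 0 ≤ c) : IsSumSq (C c : MvPolynomial σ ℝ) := by
  rw [← Real.mul_self_sqrt hc, map_mul]
  exact IsSumSq.mul_self _

variable {d : ℕ}

theorem isSOS_iff_isSumSq {p : MvPolynomial (Fin d) ℝ} : IsSOS p ↔ IsSumSq p := by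
  refine ⟨fun ⟨k, q, hp⟩ => hp ▸ IsSumSq.sum_sq _ q, fun hp => ?_⟩
  induction hp with
  | zero => exact ⟨0, ![], by simp⟩
  | sq_add a _ ih =>
    obtain ⟨k, q, rfl⟩ := ih
    exact ⟨k + 1, Fin.cons a q, by simp [Fin.sum_univ_succ, sq]⟩

theorem isSumSq_normSq : IsSumSq (normSq d) := IsSumSq.sum_sq _ _

theorem isSumSq_normSq_sub_X_sq (i : Fin d) : IsSumSq (normSq d - X i ^ 2) := by
  rw [normSq, ← add_sum_erase _ _ (mem_univ i), add_sub_cancel_left]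
  exact IsSumSq.sum_sq _ _

theorem isSumSq_normSq_pow_degree_sub_monomial_sq (α : Fin d →₀ ℕ) :
    IsSumSq (normSq d ^ α.degree - monomial α (1 : ℝ) ^ 2) := by
  have hmonomial : monomial α (1 : ℝ) ^ 2 = ∏ i ∈ α.support, (X i ^ 2) ^ α i := by
    simp only [monomial_eq, C_1, one_mul, Finsupp.prod, ← prod_pow, ← pow_mul, mul_comm]
  rw [hmonomial, Finsupp.degree_apply, ← prod_pow_eq_pow_sum]
  have hX : ∀ i : Fin d, IsSumSq (X i ^ 2 : MvPolynomial (Fin d) ℝ) :=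
    fun i => (IsSquare.sq _).isSumSq
  exact IsSumSq.prod_sub_prod _ (fun i _ => ((IsSquare.sq _).pow _).isSumSq)
    (fun i _ => (hX i).pow_sub_pow (isSumSq_normSq_sub_X_sq i) _)

end SumsOfSquares

namespace QM

variable {d : ℕ} {ι : Type*} [Fintype ι] {a : ι → MvPolynomial (Fin d) ℝ}

theorem mem_iff {f : MvPolynomial (Fin d) ℝ} :
    f ∈ QM a ↔ ∃ (σ₀ : MvPolynomial (Fin d) ℝ) (σ : ι → MvPolynomial (Fin d) ℝ),
      IsSumSq σ₀ ∧ (∀ i, IsSumSq (σ i)) ∧ f = σ₀ + ∑ i, σ i * a i := by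
  simp only [QM, Set.mem_ofPred_eq, isSOS_iff_isSumSq]

theorem mem_of_isSumSq {f : MvPolynomial (Fin d) ℝ} (hf : IsSumSq f) : f ∈ QM a :=
  mem_iff.2 ⟨f, 0, hf, fun _ => .zero, by simp⟩

theorem generator_mem [DecidableEq ι] (i : ι) : a i ∈ QM a :=
  mem_iff.2 ⟨0, Pi.single i 1, .zero,
    fun j => by by_cases hj : j = i <;> simp [hj], by simp [Pi.single_apply]⟩

theorem add_mem {f g : MvPolynomial (Fin d) ℝ} (hf : f ∈ QM a) (hg : g ∈ QM a) :
    f + g ∈ QM a := by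
  obtain ⟨σ₀, σ, hσ₀, hσ, rfl⟩ := mem_iff.1 hf
  obtain ⟨τ₀, τ, hτ₀, hτ, rfl⟩ := mem_iff.1 hg
  refine mem_iff.2 ⟨σ₀ + τ₀, σ + τ, hσ₀.add hτ₀, fun i => (hσ i).add (hτ i), ?_⟩
  simp only [Pi.add_apply, add_mul, sum_add_distrib]
  ring

theorem mul_mem_of_isSumSq {s f : MvPolynomial (Fin d) ℝ} (hs : IsSumSq s) (hf : f ∈ QM a) :
    s * f ∈ QM a := by
  obtain ⟨σ₀, σ, hσ₀, hσ, rfl⟩ := mem_iff.1 hf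
  refine mem_iff.2 ⟨s * σ₀, fun i => s * σ i, hs.mul hσ₀, fun i => hs.mul (hσ i), ?_⟩
  simp only [mul_add, mul_sum, mul_assoc]

theorem sum_mem {β : Type*} (s : Finset β) {f : β → MvPolynomial (Fin d) ℝ}
    (hf : ∀ x ∈ s, f x ∈ QM a) : ∑ x ∈ s, f x ∈ QM a :=
  sum_induction f (· ∈ QM a) (fun _ _ => add_mem) (mem_of_isSumSq .zero) hf

theorem C_add_C_mul_sub_C_mul_mem {p m : MvPolynomial (Fin d) ℝ} (hpm : p - m ^ 2 ∈ QM a)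
    {L K c : ℝ} (hL : 0 ≤ L) (hK : 0 ≤ K) (hc : c ^ 2 ≤ 4 * L * K) :
    C L + C K * p - C c * m ∈ QM a := by
  rcases hK.eq_or_lt with rfl | hK
  · obtain rfl : c = 0 := by nlinarith
    simpa using mem_of_isSumSq (isSumSq_C hL)
  obtain ⟨u, rfl⟩ : ∃ u, c = 2 * K * u := ⟨c / (2 * K), by field_simp⟩
  have hKu : 0 ≤ L - K * u ^ 2 := by nlinarith
  rw [show C L + C K * p - C (2 * K * u) * m
      = C K * (m - C u) ^ 2 + C K * (p - m ^ 2) + C (L - K * u ^ 2) by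
    simp only [map_mul, map_sub, map_pow, map_ofNat]; ring]
  exact add_mem (add_mem (mem_of_isSumSq ((isSumSq_C hK.le).mul (IsSquare.sq _).isSumSq))
    (mul_mem_of_isSumSq (isSumSq_C hK.le) hpm)) (mem_of_isSumSq (isSumSq_C hKu))

end QM

theorem tBound_nonneg {d : ℕ} (f : MvPolynomial (Fin d) ℝ) {ρ : ℝ} (hρ : -1 ≤ ρ) :
    0 ≤ tBound f ρ :=
  sum_nonneg fun _ _ => mul_nonneg (abs_nonneg _) (pow_nonneg (by linarith) _)

theorem four_mul_pow_le_sq_add_one_pow {ρ : ℝ} (hρ : 0 ≤ ρ) {k : ℕ} (hk : k ≠ 0) :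
    4 * ρ ^ k ≤ ((ρ + 1) ^ k) ^ 2 :=
  calc 4 * ρ ^ k ≤ 4 ^ k * ρ ^ k := by gcongr; exact le_self_pow₀ (by norm_num) hk
    _ = (4 * ρ) ^ k := (mul_pow _ _ _).symm
    _ ≤ ((ρ + 1) ^ 2) ^ k := by gcongr; nlinarith [sq_nonneg (ρ - 1)]
    _ = ((ρ + 1) ^ k) ^ 2 := by rw [← pow_mul, ← pow_mul, mul_comm]

section Generators

variable {d : ℕ} (h : MvPolynomial (Fin d) ℝ) {ρ : ℝ}

theorem C_pow_mul_one_add_sub_normSq_pow_mem (hρ : 0 ≤ ρ) (k : ℕ) :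
    C (ρ ^ k) * (1 + h) - normSq d ^ k ∈ QM ![h, (1 + h) * (C ρ - normSq d)] := by
  induction k with
  | zero => simpa using QM.generator_mem (a := ![h, (1 + h) * (C ρ - normSq d)]) 0
  | succ k ih =>
    rw [show C (ρ ^ (k + 1)) * (1 + h) - normSq d ^ (k + 1)
        = normSq d * (C (ρ ^ k) * (1 + h) - normSq d ^ k)
          + C (ρ ^ k) * ((1 + h) * (C ρ - normSq d)) by simp only [pow_succ, map_mul]; ring]
    exact QM.add_mem (QM.mul_mem_of_isSumSq isSumSq_normSq ih)
      (QM.mul_mem_of_isSumSq (isSumSq_C (pow_nonneg hρ k)) (QM.generator_mem 1))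

theorem C_pow_degree_mul_one_add_sub_monomial_sq_mem (hρ : 0 ≤ ρ) (α : Fin d →₀ ℕ) :
    C (ρ ^ α.degree) * (1 + h) - monomial α 1 ^ 2
      ∈ QM ![h, (1 + h) * (C ρ - normSq d)] := by
  simpa using QM.add_mem (C_pow_mul_one_add_sub_normSq_pow_mem h hρ α.degree)
    (QM.mem_of_isSumSq (isSumSq_normSq_pow_degree_sub_monomial_sq α))

end Generators

section Combination

variable {d : ℕ} (h : MvPolynomial (Fin d) ℝ) {ρ : ℝ}

theorem exists_C_add_C_mul_one_add_sub_monomial_mem (hρ : 0 < ρ) {t : ℝ} (ht : 0 ≤ t)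
    (α : Fin d →₀ ℕ) (c : ℝ) :
    ∃ L K : ℝ, 0 ≤ L ∧ L + (1 + t / 2) ^ 2 * K ≤ (1 + t / 4) * (|c| * (ρ + 1) ^ α.degree) ∧
      C L + C K * (1 + h) - monomial α c ∈ QM ![h, (1 + h) * (C ρ - normSq d)] := by
  rcases eq_or_ne α 0 with rfl | hα
  · refine ⟨|c|, 0, abs_nonneg c, ?_, ?_⟩
    · simp only [map_zero, pow_zero, mul_one, mul_zero, add_zero]
      nlinarith [abs_nonneg c]
    rw [monomial_zero', map_zero, zero_mul, add_zero, ← map_sub]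
    exact QM.mem_of_isSumSq (isSumSq_C (sub_nonneg.2 (le_abs_self c)))
  set P := (ρ + 1) ^ α.degree
  set r := ρ ^ α.degree
  have hP : 0 < P := by positivity
  have hrP : 4 * r ≤ P ^ 2 :=
    four_mul_pow_le_sq_add_one_pow hρ.le (by simpa [Finsupp.degree_eq_zero_iff] using hα)
  -- `K₀` multiplies `ρ^{|α|}(1 + h) - (X^α)²`; `4 L K₀ = c²`, and `(1 + t/2)² K₀ r ≤ L`
  -- because `4r ≤ P²`.
  set L := |c| * (2 + t) * P / 8 with hL
  set K₀ := 2 * |c| / ((2 + t) * P) with hK₀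
  refine ⟨L, K₀ * r, by positivity, ?_, ?_⟩
  · have hK : (1 + t / 2) ^ 2 * (K₀ * r) = (2 + t) * |c| * r / (2 * P) := by
      rw [hK₀]; field_simp
    have hKr : (2 + t) * |c| * r / (2 * P) ≤ |c| * (2 + t) * P / 8 := by
      rw [div_le_div_iff₀ (by positivity) (by positivity)]
      nlinarith [mul_nonneg (abs_nonneg c) (by linarith : (0 : ℝ) ≤ 2 + t)]
    rw [hK, hL]
    nlinarith [mul_nonneg (abs_nonneg c) hP.le]
  · have hc : c ^ 2 ≤ 4 * L * K₀ := le_of_eq (by rw [hL, hK₀]; field_simp; rw [sq_abs]; ring)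
    have := QM.C_add_C_mul_sub_C_mul_mem
      (C_pow_degree_mul_one_add_sub_monomial_sq_mem h hρ.le α) (by positivity) (by positivity) hc
    rwa [← mul_assoc, ← map_mul, C_mul_monomial, mul_one] at this

theorem exists_C_add_C_mul_one_add_sub_self_mem (hρ : 0 < ρ) :
    ∃ L K : ℝ, 0 ≤ L ∧ L + (1 + tBound h ρ / 2) ^ 2 * K ≤ (1 + tBound h ρ / 2) ^ 2 - 1 ∧
      C L + C K * (1 + h) - h ∈ QM ![h, (1 + h) * (C ρ - normSq d)] := by
  set t := tBound h ρ
  choose L K hL hLK hmem using fun α => exists_C_add_C_mul_one_add_sub_monomial_mem h hρ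
    (tBound_nonneg h (by linarith)) α (coeff α h)
  refine ⟨∑ α ∈ h.support, L α, ∑ α ∈ h.support, K α, sum_nonneg fun α _ => hL α, ?_, ?_⟩
  · calc ∑ α ∈ h.support, L α + (1 + t / 2) ^ 2 * ∑ α ∈ h.support, K α
        = ∑ α ∈ h.support, (L α + (1 + t / 2) ^ 2 * K α) := by rw [mul_sum, sum_add_distrib]
      _ ≤ ∑ α ∈ h.support, (1 + t / 4) * (|coeff α h| * (ρ + 1) ^ α.degree) :=
        sum_le_sum fun α _ => hLK α
      _ = (1 + t / 4) * t := by rw [← mul_sum]; rfl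
      _ = (1 + t / 2) ^ 2 - 1 := by ring
  · have := QM.sum_mem h.support fun α _ => hmem α
    rwa [sum_sub_distrib, sum_add_distrib, ← sum_mul, ← map_sum, ← map_sum,
      support_sum_monomial_coeff] at this

theorem C_mul_sub_normSq_mem_of_C_add_C_mul_one_add_sub_self_mem (hρ : 0 ≤ ρ) {L K T : ℝ}
    (hT : 0 < T) (hL : 0 ≤ L) (hLK : L + T * K ≤ T - 1)
    (hmem : C L + C K * (1 + h) - h ∈ QM ![h, (1 + h) * (C ρ - normSq d)]) :
    C (ρ * T) - normSq d ∈ QM ![h, (1 + h) * (C ρ - normSq d)] := by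
  have hK : 0 < 1 - K := by nlinarith
  set b := ρ / (1 - K)
  have hb : b * (1 - K) = ρ := div_mul_cancel₀ ρ hK.ne'
  have he : 0 ≤ ρ * T - b * (1 + L) := by
    rw [← hb]; nlinarith [div_nonneg hρ hK.le]
  rw [show C (ρ * T) - normSq d = C b * (C L + C K * (1 + h) - h)
      + (C (ρ ^ 1) * (1 + h) - normSq d ^ 1) + C (ρ * T - b * (1 + L)) by
    rw [← hb]; simp only [map_mul, map_sub, map_add, map_one, pow_one]; ring]
  exact QM.add_mem (QM.add_mem (QM.mul_mem_of_isSumSq (isSumSq_C (div_nonneg hρ hK.le)) hmem)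
    (C_pow_mul_one_add_sub_normSq_pow_mem h hρ 1)) (QM.mem_of_isSumSq (isSumSq_C he))

end Combination

theorem exists_rho'_sub_normSq_mem_QM (d : ℕ) (h : MvPolynomial (Fin d) ℝ)
    (ρ : ℝ) (hρ : 0 < ρ) :
    ∃ ρ' : ℝ, 0 < ρ' ∧ ρ' = ρ * (1 + tBound h ρ / 2) ^ 2 ∧
      C ρ' - normSq d ∈
        QM (![h, (1 + h) * (C ρ - normSq d)] : Fin 2 → MvPolynomial (Fin d) ℝ) := by
  have hT : 0 < (1 + tBound h ρ / 2) ^ 2 := pow_pos (by linarith [tBound_nonneg h (by linarith)]) 2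
  obtain ⟨L, K, hL, hLK, hmem⟩ := exists_C_add_C_mul_one_add_sub_self_mem h hρ
  exact ⟨_, mul_pos hρ hT, rfl,
    C_mul_sub_normSq_mem_of_C_add_C_mul_one_add_sub_self_mem h hρ.le hT hL hLK hmem⟩
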